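/- arXiv:2112.00519 — 2 statements merged into one kernel-verified Lean document; each statement's English description precedes it below -/
import Mathlib

section
/- If 3 ≤ m ≤ n, then for every v ∈ S one has n − 2n/m + 2n/m² ≤ ζ_v ≤ n + n/m − 2n/m², and consequently 0.55·n < ζ_v < 1.13·n. -/
/-!
Let `a_u ∈ ℝ^E` be the edge part of `x_u`, so that `ζ_v = ‖a_v - (1/m) ∑_{u ∈ S} a_u‖²` depends
only on the Gram matrix of the `a_u`. Every vertex meets exactly `n` arcs of `G'`, and two distinct
vertices share an arc, with opposite signs, exactly when they are adjacent; hence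
`⟪a_u, a_w⟫ = n [u = w] - A u w` for the adjacency matrix `A` of `G`. Expanding the square,
`ζ_v = n - (2/m)(n - d) + (mn - P)/m²` with `d = ∑_{w ∈ S} A v w` and `P = ∑_{u, w ∈ S} A u w`.
Splitting off the row and column of `v` gives `2d ≤ P ≤ 2d + (m-1)(m-2)`, and with `0 ≤ d ≤ m - 1`
this yields the two bounds. The numeric ones are the minimum `5/9` of `1 - 2t + 2t²` and the
maximum `9/8` of `1 + t - 2t²` over `0 < t = 1/m ≤ 1/3`.
-/

open Finset

theorem sum_sub_mul_sum_sq {ι κ : Type*} [Fintype κ] (f : ι → κ → ℝ) (s : Finset ι) (t : ℝ)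
    (i : ι) :
    ∑ k, (f i k - t * ∑ j ∈ s, f j k) ^ 2
      = ∑ k, f i k * f i k - 2 * t * ∑ j ∈ s, ∑ k, f i k * f j k
        + t ^ 2 * ∑ j ∈ s, ∑ l ∈ s, ∑ k, f j k * f l k := by
  have hk : ∀ k, (f i k - t * ∑ j ∈ s, f j k) ^ 2 = f i k * f i k
      - 2 * t * ∑ j ∈ s, f i k * f j k + t ^ 2 * ∑ j ∈ s, ∑ l ∈ s, f j k * f l k := fun k => by
    rw [← mul_sum, ← sum_mul_sum]
    ring
  rw [sum_congr rfl fun k _ => hk k, sum_add_distrib, sum_sub_distrib, ← mul_sum, ← mul_sum]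
  simp_rw [sum_comm (s := (univ : Finset κ))]

namespace Matrix.IsAdjMatrix

variable {ι : Type*} {A : Matrix ι ι ℝ}

theorem apply_nonneg (hA : A.IsAdjMatrix) (i j : ι) : 0 ≤ A i j := by
  rcases hA.zero_or_one i j with h | h <;> simp [h]

theorem apply_le_one (hA : A.IsAdjMatrix) (i j : ι) : A i j ≤ 1 := by
  rcases hA.zero_or_one i j with h | h <;> simp [h]

variable [DecidableEq ι]

theorem sum_row_le_card_sub_one (hA : A.IsAdjMatrix) {s : Finset ι} {i : ι} (hi : i ∈ s) :
    ∑ j ∈ s, A i j ≤ #s - 1 := by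
  rw [← add_sum_erase s _ hi, hA.apply_diag, zero_add, ← Nat.cast_pred (card_pos.2 ⟨i, hi⟩),
    ← card_erase_of_mem hi]
  simpa using sum_le_card_nsmul _ _ 1 fun j _ => hA.apply_le_one i j

theorem sum_sum_eq_two_mul_sum_row_add (hA : A.IsAdjMatrix) {s : Finset ι} {i : ι} (hi : i ∈ s) :
    ∑ j ∈ s, ∑ k ∈ s, A j k = 2 * ∑ j ∈ s, A i j + ∑ j ∈ s.erase i, ∑ k ∈ s.erase i, A j k := by
  have hrow : ∀ j, ∑ k ∈ s, A j k = A j i + ∑ k ∈ s.erase i, A j k := fun j =>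
    (add_sum_erase s _ hi).symm
  rw [← add_sum_erase s _ hi, hrow i, hA.apply_diag, zero_add]
  simp_rw [hrow, sum_add_distrib, hA.symm.apply i]
  ring

theorem two_mul_sum_row_le_sum_sum_le (hA : A.IsAdjMatrix) {s : Finset ι} {i : ι} (hi : i ∈ s) :
    2 * ∑ j ∈ s, A i j ≤ ∑ j ∈ s, ∑ k ∈ s, A j k ∧
      ∑ j ∈ s, ∑ k ∈ s, A j k ≤ 2 * ∑ j ∈ s, A i j + (#s - 1) * (#s - 2) := by
  rw [hA.sum_sum_eq_two_mul_sum_row_add hi]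
  refine ⟨le_add_of_nonneg_right (sum_nonneg fun j _ => sum_nonneg fun k _ => hA.apply_nonneg j k),
    ?_⟩
  have hrow : ∀ j ∈ s.erase i, ∑ k ∈ s.erase i, A j k ≤ #s - 2 := fun j hj => by
    have := hA.sum_row_le_card_sub_one hj
    rw [card_erase_of_mem hi, Nat.cast_pred (card_pos.2 ⟨i, hi⟩)] at this
    linarith
  have := sum_le_sum hrow
  rw [sum_const, card_erase_of_mem hi, nsmul_eq_mul, Nat.cast_pred (card_pos.2 ⟨i, hi⟩)] at this
  linarith

end Matrix.IsAdjMatrix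

namespace SimpleGraph

/-- Arcs `e` with `tail e = head e` are loops and are ignored; the other arcs orient every edge of
`G` exactly once. -/
structure IsOrientation {V E : Type*} (G : SimpleGraph V) (tail head : E → V) : Prop where
  adj : ∀ e, tail e ≠ head e → G.Adj (tail e) (head e)
  inj : ∀ e₁ e₂, tail e₁ ≠ head e₁ → tail e₂ ≠ head e₂ →
    (s(tail e₁, head e₁) : Sym2 V) = s(tail e₂, head e₂) → e₁ = e₂
  surj : ∀ u v, G.Adj u v → ∃ e, (s(tail e, head e) : Sym2 V) = s(u, v)

variable {V E : Type*} [DecidableEq V] [Fintype E] {G : SimpleGraph V} {tail head : E → V}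

theorem IsOrientation.card_filter_nonloop_eq [Fintype G.edgeSet] (hG : G.IsOrientation tail head)
    (p : Sym2 V → Prop) [DecidablePred p] :
    #{e | tail e ≠ head e ∧ p s(tail e, head e)} = #{z ∈ G.edgeFinset | p z} := by
  refine card_bij (fun e _ => s(tail e, head e)) (fun e he => ?_)
    (fun e₁ he₁ e₂ he₂ => hG.inj e₁ e₂ (mem_filter.1 he₁).2.1 (mem_filter.1 he₂).2.1) ?_
  · obtain ⟨hne, hp⟩ := (mem_filter.1 he).2
    exact mem_filter.2 ⟨G.mem_edgeFinset.2 (hG.adj e hne), hp⟩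
  · intro z hz
    obtain ⟨hz, hp⟩ := mem_filter.1 hz
    induction z using Sym2.ind with
    | h u w =>
      obtain ⟨e, he⟩ := hG.surj u w (G.mem_edgeFinset.1 hz)
      have hne : tail e ≠ head e := fun h =>
        G.not_isDiag_of_mem_edgeSet (G.mem_edgeFinset.1 hz) (he ▸ Sym2.mk_isDiag_iff.2 h)
      exact ⟨e, mem_filter.2 ⟨mem_univ e, hne, he ▸ hp⟩, he⟩

variable [Fintype V] [DecidableRel G.Adj]

theorem IsOrientation.card_filter_incident_eq (hG : G.IsOrientation tail head)
    (hloops : ∀ v, #{e | tail e = v ∧ head e = v} = Fintype.card V - G.degree v) (u : V) :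
    #{e | head e = u ∨ tail e = u} = Fintype.card V := by
  have hsplit : #{e | head e = u ∨ tail e = u}
      = #{e | tail e = u ∧ head e = u} + #{e | tail e ≠ head e ∧ u ∈ s(tail e, head e)} := by
    rw [← card_filter_add_card_filter_not (p := fun e => tail e = head e), filter_filter,
      filter_filter]
    congr 2 <;> exact filter_congr fun e _ => by grind
  rw [hsplit, hloops u, hG.card_filter_nonloop_eq (u ∈ ·), ← incidenceFinset_eq_filter,
    card_incidenceFinset_eq_degree]
  have := G.degree_lt_card_verts u
  omega

theorem IsOrientation.card_filter_joining_eq (hG : G.IsOrientation tail head) {u w : V}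
    (huw : u ≠ w) :
    #{e | (head e = u ∧ tail e = w) ∨ (head e = w ∧ tail e = u)} = if G.Adj u w then 1 else 0 := by
  have hjoin : #{e | (head e = u ∧ tail e = w) ∨ (head e = w ∧ tail e = u)}
      = #{e | tail e ≠ head e ∧ s(tail e, head e) = s(u, w)} := by
    congr 1
    exact filter_congr fun e _ => by grind [Sym2.eq_iff]
  rw [hjoin, hG.card_filter_nonloop_eq (· = s(u, w)), filter_eq']
  by_cases h : G.Adj u w <;> simp [h]

end SimpleGraph

def signedIncidence {V E : Type*} [DecidableEq V] (tail head : E → V) (u : V) (e : E) : ℝ :=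
  if head e = u then -1 else if tail e = u then 1 else 0

theorem SimpleGraph.IsOrientation.sum_signedIncidence_mul {V E : Type*} [Fintype V]
    [DecidableEq V] [Fintype E] {G : SimpleGraph V} [DecidableRel G.Adj] {tail head : E → V}
    (hG : G.IsOrientation tail head)
    (hloops : ∀ v, #{e | tail e = v ∧ head e = v} = Fintype.card V - G.degree v) (u w : V) :
    ∑ e, signedIncidence tail head u e * signedIncidence tail head w e
      = (if u = w then (Fintype.card V : ℝ) else 0) - G.adjMatrix ℝ u w := by
  by_cases huw : u = w
  · subst huw
    have hsq : ∀ e, signedIncidence tail head u e * signedIncidence tail head u e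
        = if head e = u ∨ tail e = u then 1 else 0 := fun e => by
      unfold signedIncidence; split_ifs <;> simp_all
    simp [hsq, hG.card_filter_incident_eq hloops]
  · have hmul : ∀ e, signedIncidence tail head u e * signedIncidence tail head w e
        = -if (head e = u ∧ tail e = w) ∨ (head e = w ∧ tail e = u) then 1 else 0 := fun e => by
      unfold signedIncidence; split_ifs <;> simp_all
    simp only [hmul, sum_neg_distrib, sum_boole, hG.card_filter_joining_eq huw]
    rw [SimpleGraph.adjMatrix_apply]
    split_ifs <;> simp

theorem sq_dist_centroid_bounds {n m d P : ℝ} (hm : 3 ≤ m) (hmn : m ≤ n) (hd0 : 0 ≤ d)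
    (hd : d ≤ m - 1) (hP : 2 * d ≤ P) (hP' : P ≤ 2 * d + (m - 1) * (m - 2)) :
    n - 2 * n / m + 2 * n / m ^ 2 ≤ n - 2 * m⁻¹ * (n - d) + m⁻¹ ^ 2 * (m * n - P) ∧
      n - 2 * m⁻¹ * (n - d) + m⁻¹ ^ 2 * (m * n - P) ≤ n + n / m - 2 * n / m ^ 2 := by
  have hm0 : 0 < m := by linarith
  constructor
  · rw [← sub_nonneg]
    have hdiff : n - 2 * m⁻¹ * (n - d) + m⁻¹ ^ 2 * (m * n - P) - (n - 2 * n / m + 2 * n / m ^ 2)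
        = (2 * d * (m - 1) + (m - 2) * n - (P - 2 * d)) / m ^ 2 := by
      field_simp; ring
    rw [hdiff]
    apply div_nonneg _ (by positivity)
    nlinarith
  · rw [← sub_nonneg]
    have hdiff : n + n / m - 2 * n / m ^ 2 - (n - 2 * m⁻¹ * (n - d) + m⁻¹ ^ 2 * (m * n - P))
        = (2 * (m - 1) * (n - d) + (P - 2 * d)) / m ^ 2 := by
      field_simp; ring
    rw [hdiff]
    apply div_nonneg _ (by positivity)
    nlinarith

theorem sq_dist_centroid_bounds_numeric {n m : ℝ} (hn : 0 < n) (hm : 3 ≤ m) :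
    0.55 * n < n - 2 * n / m + 2 * n / m ^ 2 ∧ n + n / m - 2 * n / m ^ 2 < 1.13 * n := by
  have hm2 : 0 < m ^ 2 := by positivity
  constructor
  · have hdiff : n - 2 * n / m + 2 * n / m ^ 2 - 0.55 * n
        = n * (0.45 * m ^ 2 - 2 * m + 2) / m ^ 2 := by
      field_simp; ring
    have := div_pos (mul_pos hn (by nlinarith : (0 : ℝ) < 0.45 * m ^ 2 - 2 * m + 2)) hm2
    linarith
  · have hdiff : 1.13 * n - (n + n / m - 2 * n / m ^ 2)
        = n * (0.13 * m ^ 2 - m + 2) / m ^ 2 := by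
      field_simp; ring
    have := div_pos (mul_pos hn (by nlinarith [sq_nonneg (m - 50 / 13)] :
      (0 : ℝ) < 0.13 * m ^ 2 - m + 2)) hm2
    linarith

theorem zeta_bounds_general
    {V E : Type*} [Fintype V] [DecidableEq V] [Fintype E]
    (G : SimpleGraph V) [DecidableRel G.Adj]
    (tail head : E → V)
    (hadj : ∀ e : E, tail e ≠ head e → G.Adj (tail e) (head e))
    (hinj : ∀ e₁ e₂ : E, tail e₁ ≠ head e₁ → tail e₂ ≠ head e₂ →
      (s(tail e₁, head e₁) : Sym2 V) = s(tail e₂, head e₂) → e₁ = e₂)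
    (hsurj : ∀ u v : V, G.Adj u v → ∃ e : E, (s(tail e, head e) : Sym2 V) = s(u, v))
    (hloops : ∀ v : V, (Finset.univ.filter fun e : E => tail e = v ∧ head e = v).card
        = Fintype.card V - G.degree v)
    (x : V → EuclideanSpace ℝ (E ⊕ V))
    (hxE : ∀ (v : V) (e : E),
      x v (Sum.inl e) = if head e = v then -1 else if tail e = v then 1 else 0)
    (S : Finset V) (m : ℕ) (hS : S.card = m)
    (c : EuclideanSpace ℝ (E ⊕ V)) (hc : c = (m : ℝ)⁻¹ • ∑ v ∈ S, x v)
    (hm : 3 ≤ m) (hmn : m ≤ Fintype.card V)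
    (z : V → EuclideanSpace ℝ (E ⊕ V)) (hz : ∀ v : V, z v = x v - c)
    (ζ : V → ℝ) (hζ : ∀ v : V, ζ v = ∑ e : E, (z v (Sum.inl e)) ^ 2)
 :
    ∀ v ∈ S,
      ((Fintype.card V : ℝ) - 2 * (Fintype.card V : ℝ) / m
          + 2 * (Fintype.card V : ℝ) / (m : ℝ) ^ 2 ≤ ζ v ∧
        ζ v ≤ (Fintype.card V : ℝ) + (Fintype.card V : ℝ) / m
          - 2 * (Fintype.card V : ℝ) / (m : ℝ) ^ 2) ∧
      (0.55 * (Fintype.card V : ℝ) < ζ v ∧ ζ v < 1.13 * (Fintype.card V : ℝ)) := by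
  intro v hv
  have hG : G.IsOrientation tail head := ⟨hadj, hinj, hsurj⟩
  have hzv : ∀ e, z v (Sum.inl e) = signedIncidence tail head v e
      - (m : ℝ)⁻¹ * ∑ u ∈ S, signedIncidence tail head u e := fun e => by
    simp [hz, hc, hxE, signedIncidence, WithLp.ofLp_sum]
  have hζv : ζ v = Fintype.card V - 2 * (m : ℝ)⁻¹ * (Fintype.card V - ∑ w ∈ S, G.adjMatrix ℝ v w)
      + (m : ℝ)⁻¹ ^ 2 * (m * Fintype.card V - ∑ u ∈ S, ∑ w ∈ S, G.adjMatrix ℝ u w) := by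
    simp only [hζ, hzv, sum_sub_mul_sum_sq, hG.sum_signedIncidence_mul hloops]
    simp [sum_sub_distrib, sum_ite_eq, hv, hS]
  have hA := G.isAdjMatrix_adjMatrix (α := ℝ)
  obtain ⟨hP, hP'⟩ := hA.two_mul_sum_row_le_sum_sum_le hv
  have hd := hA.sum_row_le_card_sub_one hv
  rw [hS] at hP' hd
  have hm' : (3 : ℝ) ≤ m := by exact_mod_cast hm
  have hmn' : (m : ℝ) ≤ Fintype.card V := by exact_mod_cast hmn
  obtain ⟨hlo, hhi⟩ := sq_dist_centroid_bounds hm' hmn'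
    (sum_nonneg fun w _ => hA.apply_nonneg v w) hd hP hP'
  obtain ⟨hlo', hhi'⟩ := sq_dist_centroid_bounds_numeric (n := Fintype.card V) (by linarith) hm'
  rw [hζv]
  exact ⟨⟨hlo, hhi⟩, hlo'.trans_le hlo, hhi.trans_lt hhi'⟩

/-- If `3 ≤ m ≤ n`, then for every `v ∈ S` one has
`n − 2n/m + 2n/m² ≤ ζ_v ≤ n + n/m − 2n/m²`, and consequently `0.55·n < ζ_v < 1.13·n`. -/
theorem zeta_bounds
    {V E : Type*} [Fintype V] [DecidableEq V] [Fintype E] [DecidableEq E]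
    (G : SimpleGraph V) [DecidableRel G.Adj]
    (tail head : E → V)
    (hadj : ∀ e : E, tail e ≠ head e → G.Adj (tail e) (head e))
    (hinj : ∀ e₁ e₂ : E, tail e₁ ≠ head e₁ → tail e₂ ≠ head e₂ →
      (s(tail e₁, head e₁) : Sym2 V) = s(tail e₂, head e₂) → e₁ = e₂)
    (hsurj : ∀ u v : V, G.Adj u v → ∃ e : E, (s(tail e, head e) : Sym2 V) = s(u, v))
    (hloops : ∀ v : V, (Finset.univ.filter fun e : E => tail e = v ∧ head e = v).card
        = Fintype.card V - G.degree v)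
    (M : ℝ) (hM : 0 < M)
    (x : V → EuclideanSpace ℝ (E ⊕ V))
    (hxE : ∀ (v : V) (e : E),
      x v (Sum.inl e) = if head e = v then -1 else if tail e = v then 1 else 0)
    (hxV : ∀ v u : V, x v (Sum.inr u) = if u = v then M else 0)
    (S : Finset V) (m : ℕ) (hS : S.card = m)
    (c : EuclideanSpace ℝ (E ⊕ V)) (hc : c = (m : ℝ)⁻¹ • ∑ v ∈ S, x v)
    (hm : 3 ≤ m) (hmn : m ≤ Fintype.card V)
    (z : V → EuclideanSpace ℝ (E ⊕ V)) (hz : ∀ v : V, z v = x v - c)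
    (ζ : V → ℝ) (hζ : ∀ v : V, ζ v = ∑ e : E, (z v (Sum.inl e)) ^ 2)
 :
    ∀ v ∈ S,
      ((Fintype.card V : ℝ) - 2 * (Fintype.card V : ℝ) / m
          + 2 * (Fintype.card V : ℝ) / (m : ℝ) ^ 2 ≤ ζ v ∧
        ζ v ≤ (Fintype.card V : ℝ) + (Fintype.card V : ℝ) / m
          - 2 * (Fintype.card V : ℝ) / (m : ℝ) ^ 2) ∧
      (0.55 * (Fintype.card V : ℝ) < ζ v ∧ ζ v < 1.13 * (Fintype.card V : ℝ)) :=
  zeta_bounds_general G tail head hadj hinj hsurj hloops x hxE S m hS c hc hm hmn z hz ζ hζ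
end

section
/- For any two distinct vertices u, v of G, the sup-norm distance ‖x_u − x_v‖_∞ equals 2 if u and v are adjacent in G, and equals 1 if u and v are not adjacent in G. -/
/-! Every coordinate of `x_u - x_v` is a difference of two numbers in `{-1, 0, 1}`. It equals `±2`
exactly on an edge joining `u` and `v`, and is `±1` on an edge at `u` that misses `v`; since `G`
has no isolated vertices such an edge exists, and the sup norm picks out the largest coordinate. -/

theorem pi_norm_eq_of_forall_abs_le_of_exists_abs_eq {ι : Type*} [Fintype ι] {f : ι → ℝ} {C : ℝ}
    (hle : ∀ i, |f i| ≤ C) (heq : ∃ i, |f i| = C) : ‖f‖ = C := by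
  obtain ⟨i, hi⟩ := heq
  refine le_antisymm ((pi_norm_le_iff_of_nonneg ?_).2 hle) (hi ▸ norm_le_pi_norm f i)
  exact hi ▸ abs_nonneg _

section Incidence

variable {V E : Type*} [DecidableEq V] (tail head : E → V)

def incidence (v : V) (e : E) : ℝ :=
  if tail e = v then 1 else if head e = v then -1 else 0

variable {tail head}

theorem abs_incidence_le_one (v : V) (e : E) : |incidence tail head v e| ≤ 1 := by
  unfold incidence
  split_ifs <;> norm_num

theorem incidence_eq_zero_of_notMem {v : V} {e : E} (hv : v ∉ s(tail e, head e)) :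
    incidence tail head v e = 0 := by
  rw [Sym2.mem_iff, not_or] at hv
  simp [incidence, Ne.symm hv.1, Ne.symm hv.2]

theorem abs_incidence_eq_one_of_mem {v : V} {e : E} (hv : v ∈ s(tail e, head e)) :
    |incidence tail head v e| = 1 := by
  rcases Sym2.mem_iff.1 hv with rfl | rfl <;> unfold incidence <;> split_ifs <;> simp_all

theorem abs_incidence_sub_eq_one {u v : V} {e : E} (hu : u ∈ s(tail e, head e))
    (hv : v ∉ s(tail e, head e)) :
    |incidence tail head u e - incidence tail head v e| = 1 := by
  rw [incidence_eq_zero_of_notMem hv, sub_zero, abs_incidence_eq_one_of_mem hu]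

theorem abs_incidence_sub_eq_two {u v : V} {e : E} (huv : u ≠ v)
    (he : s(tail e, head e) = s(u, v)) :
    |incidence tail head u e - incidence tail head v e| = 2 := by
  rcases Sym2.eq_iff.1 he with ⟨rfl, rfl⟩ | ⟨rfl, rfl⟩ <;>
    norm_num [incidence, huv, Ne.symm huv]

theorem abs_incidence_sub_le_two (u v : V) (e : E) :
    |incidence tail head u e - incidence tail head v e| ≤ 2 := by
  calc |incidence tail head u e - incidence tail head v e|
      _ ≤ |incidence tail head u e| + |incidence tail head v e| := abs_sub _ _
      _ ≤ 1 + 1 := add_le_add (abs_incidence_le_one u e) (abs_incidence_le_one v e)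
      _ = 2 := by norm_num

theorem abs_incidence_sub_le_one {u v : V} {e : E} (he : s(tail e, head e) ≠ s(u, v)) :
    |incidence tail head u e - incidence tail head v e| ≤ 1 := by
  by_cases hv : v ∈ s(tail e, head e)
  · by_cases hu : u ∈ s(tail e, head e)
    · obtain rfl : u = v := by
        by_contra huv
        exact he ((Sym2.mem_and_mem_iff huv).1 ⟨hu, hv⟩)
      simp
    · rw [incidence_eq_zero_of_notMem hu, zero_sub, abs_neg]
      exact abs_incidence_le_one v e
  · rw [incidence_eq_zero_of_notMem hv, sub_zero]
    exact abs_incidence_le_one u e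

end Incidence

theorem linf_distance_formula_general
    {V E : Type*} [DecidableEq V] [Fintype E]
    (G : SimpleGraph V) [DecidableRel G.Adj]
    (hiso : ∀ v : V, ∃ u : V, G.Adj v u)
    (tail head : E → V)
    (hadj : ∀ e : E, G.Adj (tail e) (head e))
    (hsurj : ∀ u v : V, G.Adj u v → ∃ e : E, (s(tail e, head e) : Sym2 V) = s(u, v))
    (x : V → E → ℝ)
    (hx : ∀ (v : V) (e : E),
      x v e = if tail e = v then 1 else if head e = v then -1 else 0)
    (u v : V) (huv : u ≠ v) :
    ‖x u - x v‖ = if G.Adj u v then 2 else 1 := by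
  obtain rfl : x = incidence tail head := funext₂ hx
  split_ifs with h
  · obtain ⟨e, he⟩ := hsurj u v h
    exact pi_norm_eq_of_forall_abs_le_of_exists_abs_eq (abs_incidence_sub_le_two u v)
      ⟨e, abs_incidence_sub_eq_two huv he⟩
  · obtain ⟨w, hw⟩ := hiso u
    obtain ⟨e, he⟩ := hsurj u w hw
    have hv : v ∉ s(u, w) := by
      rw [Sym2.mem_iff]
      rintro (rfl | rfl) <;> [exact huv rfl; exact h hw]
    refine pi_norm_eq_of_forall_abs_le_of_exists_abs_eq (fun e' ↦ abs_incidence_sub_le_one ?_)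
      ⟨e, abs_incidence_sub_eq_one (he ▸ Sym2.mem_mk_left u w) (he ▸ hv)⟩
    intro he'
    exact h (G.mem_edgeSet.1 (he' ▸ G.mem_edgeSet.2 (hadj e')))

/-- For any two distinct vertices `u, v` of `G`, the sup-norm distance
`‖x_u − x_v‖_∞` equals `2` if `u` and `v` are adjacent in `G`, and `1` otherwise. -/
theorem linf_distance_formula
    {V E : Type*} [Fintype V] [DecidableEq V] [Fintype E] [DecidableEq E]
    (G : SimpleGraph V) [DecidableRel G.Adj]
    (hiso : ∀ v : V, ∃ u : V, G.Adj v u)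
    (tail head : E → V)
    (hadj : ∀ e : E, G.Adj (tail e) (head e))
    (hinj : ∀ e₁ e₂ : E,
      (s(tail e₁, head e₁) : Sym2 V) = s(tail e₂, head e₂) → e₁ = e₂)
    (hsurj : ∀ u v : V, G.Adj u v → ∃ e : E, (s(tail e, head e) : Sym2 V) = s(u, v))
    (x : V → E → ℝ)
    (hx : ∀ (v : V) (e : E),
      x v e = if tail e = v then 1 else if head e = v then -1 else 0)
    (u v : V) (huv : u ≠ v) :
    ‖x u - x v‖ = if G.Adj u v then 2 else 1 :=
  linf_distance_formula_general G hiso tail head hadj hsurj x hx u v huv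
end
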